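/- Let D be a strongly connected digraph of order n with diameter d ≥ 3. Then smc_v(D) ≤ n − d + 2. -/

import Mathlib

namespace SVMC

variable {V : Type*}

/-- `IsWalk A u v l` : `u :: l` is a directed walk from `u` to `v` in the digraph
with arc relation `A`; its length (number of arcs) is `l.length`. -/
def IsWalk (A : V → V → Prop) (u v : V) (l : List V) : Prop :=
  List.Chain A u l ∧ (u :: l).getLast (List.cons_ne_nil u l) = v

/-- A directed path: a walk with no repeated vertices. -/
def IsPath (A : V → V → Prop) (u v : V) (l : List V) : Prop :=
  IsWalk A u v l ∧ (u :: l).Nodup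

def Reachable (A : V → V → Prop) (u v : V) : Prop := ∃ l, IsWalk A u v l

/-- A digraph is strong if every vertex is reachable from every other vertex. -/
def Strong (A : V → V → Prop) : Prop := ∀ u v : V, Reachable A u v

/-- Directed distance: the minimum length of a directed walk from `u` to `v`. -/
noncomputable def dist (A : V → V → Prop) (u v : V) : ℕ :=
  sInf {n | ∃ l, IsWalk A u v l ∧ l.length = n}

/-- Diameter: maximum directed distance over ordered pairs of vertices. -/
noncomputable def diam (A : V → V → Prop) : ℕ :=
  sSup {d | ∃ u v : V, dist A u v = d}

/-- The internal vertices of the walk `u :: l` (ending at the last entry of `l`)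
are `l.dropLast`.  `MonoInternal Γ l` says they all receive one color. -/
def MonoInternal (Γ : V → ℕ) (l : List V) : Prop :=
  ∃ c, ∀ x ∈ l.dropLast, Γ x = c

/-- A strong vertex-monochromatic connection coloring. -/
def IsSVMC (A : V → V → Prop) (Γ : V → ℕ) : Prop :=
  ∀ u v : V, ∃ l, IsPath A u v l ∧ MonoInternal Γ l

/-- The number of colors used by a vertex coloring. -/
noncomputable def colorCount (Γ : V → ℕ) : ℕ := (Set.range Γ).ncard

/-- The strong vertex-monochromatic connection number. -/
noncomputable def smcv (A : V → V → Prop) : ℕ :=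
  sSup {k | ∃ Γ : V → ℕ, IsSVMC A Γ ∧ colorCount Γ = k}

def TotalAbsorbing (A : V → V → Prop) (S : Set V) : Prop := ∀ v : V, ∃ w ∈ S, A v w

def TotalDominating (A : V → V → Prop) (S : Set V) : Prop := ∀ v : V, ∃ w ∈ S, A w v

def Absorbing (A : V → V → Prop) (S : Set V) : Prop := ∀ v ∉ S, ∃ w ∈ S, A v w

def Dominating (A : V → V → Prop) (S : Set V) : Prop := ∀ v ∉ S, ∃ w ∈ S, A w v

/-- A walk all of whose vertices lie in `S`. -/
def IsWalkIn (A : V → V → Prop) (S : Set V) (u v : V) (l : List V) : Prop :=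
  IsWalk A u v l ∧ ∀ x ∈ u :: l, x ∈ S

/-- The subdigraph induced by `S` is strongly connected. -/
def StrongOn (A : V → V → Prop) (S : Set V) : Prop :=
  ∀ u ∈ S, ∀ v ∈ S, ∃ l, IsWalkIn A S u v l

/-- `Ω_v(D)`: minimum order of a strong, absorbing and dominating subdigraph. -/
noncomputable def Omegav (A : V → V → Prop) : ℕ :=
  sInf {k | ∃ S : Set V, S.Nonempty ∧ StrongOn A S ∧ Absorbing A S ∧
    Dominating A S ∧ S.ncard = k}

/-- A directed cycle through `u` with vertex list `u :: l` (length `l.length`). -/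
def IsCycle (A : V → V → Prop) (u : V) (l : List V) : Prop :=
  l ≠ [] ∧ IsWalk A u u l ∧ (u :: l.dropLast).Nodup

/-- The girth: minimum length of a directed cycle. -/
noncomputable def girth (A : V → V → Prop) : ℕ :=
  sInf {n | ∃ u l, IsCycle A u l ∧ l.length = n}

/-- The arcs of the walk `u :: l` are the consecutive pairs, i.e. `(u :: l).zip l`.
`MonoArcs` says they all get one color under the arc coloring `ΓA`. -/
def MonoArcs (ΓA : V → V → ℕ) (u : V) (l : List V) : Prop :=
  ∃ c, ∀ p ∈ (u :: l).zip l, ΓA p.1 p.2 = c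

/-- A strong monochromatic connection (arc) coloring. -/
def IsSMC (A : V → V → Prop) (ΓA : V → V → ℕ) : Prop :=
  ∀ u v : V, ∃ l, IsPath A u v l ∧ MonoArcs ΓA u l

/-- The number of colors used on the arcs. -/
noncomputable def arcColorCount (A : V → V → Prop) (ΓA : V → V → ℕ) : ℕ :=
  ((fun p : V × V => ΓA p.1 p.2) '' {p : V × V | A p.1 p.2}).ncard

/-- The strong monochromatic connection number (arc version). -/
noncomputable def smc (A : V → V → Prop) : ℕ :=
  sSup {k | ∃ ΓA : V → V → ℕ, IsSMC A ΓA ∧ arcColorCount A ΓA = k}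

/-- The number of arcs of a digraph. -/
noncomputable def arcCount (A : V → V → Prop) : ℕ := {p : V × V | A p.1 p.2}.ncard

/-- `Ω(D)`: minimum number of arcs of a strong spanning subdigraph. -/
noncomputable def Omega (A : V → V → Prop) : ℕ :=
  sInf {k | ∃ B : V → V → Prop, (∀ u v, B u v → A u v) ∧ Strong B ∧ arcCount B = k}

/-- The arcs of `A`, as the vertex type of the line digraph. -/
def Arc (A : V → V → Prop) : Type _ := {p : V × V // A p.1 p.2}

/-- Adjacency in the line digraph: head of `e` equals tail of `f`. -/
def lineAdj (A : V → V → Prop) : Arc A → Arc A → Prop :=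
  fun e f => e.1.2 = f.1.1

/-- `(u,v)` is a bad pair: `N⁺(u) = {v}` and `N⁻(v) = {u}`. -/
def BadPair (A : V → V → Prop) (u v : V) : Prop :=
  {w | A u w} = {v} ∧ {w | A w v} = {u}

/-- A tournament: an orientation of a complete graph. -/
def IsTournament (A : V → V → Prop) : Prop :=
  (∀ v, ¬ A v v) ∧ ∀ u v : V, u ≠ v → (A u v ↔ ¬ A v u)

/-- The directed 3-cycle on `Fin 3`. -/
def C3Adj : Fin 3 → Fin 3 → Prop := fun i j => j = i + 1

/-- `A` is isomorphic to the directed 3-cycle. -/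
def IsoC3 (A : V → V → Prop) : Prop :=
  ∃ e : V ≃ Fin 3, ∀ u v : V, A u v ↔ C3Adj (e u) (e v)

end SVMC

/-! Pick a diametral pair `(u, v)`. In an SVMC-coloring some `(u, v)`-path has all its internal
vertices in one color; the path has at least `d` arcs, hence at least `d - 1` internal vertices, so
they contribute one color and the remaining at most `n - d + 1` vertices at most one color each. -/

namespace SVMC

variable {V : Type*} {A : V → V → Prop}

theorem dist_le_length {u v : V} {l : List V} (h : IsWalk A u v l) : dist A u v ≤ l.length :=
  Nat.sInf_le ⟨l, h, rfl⟩

theorem exists_dist_eq_diam [Finite V] (A : V → V → Prop) (h : diam A ≠ 0) :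
    ∃ u v, dist A u v = diam A := by
  have hrange : {d | ∃ u v : V, dist A u v = d} = Set.range fun p : V × V => dist A p.1 p.2 := by
    ext; simp
  have hne : {d | ∃ u v : V, dist A u v = d}.Nonempty := by
    by_contra hemp
    rw [Set.not_nonempty_iff_eq_empty] at hemp
    exact h (by rw [diam, hemp, csSup_empty, Nat.bot_eq_zero])
  exact Nat.sSup_mem hne (hrange ▸ Set.finite_range _).bddAbove

theorem colorCount_le_ncard_compl_add_one [Finite V] {Γ : V → ℕ} {S : Set V} {c : ℕ}
    (hS : ∀ x ∈ S, Γ x = c) : colorCount Γ ≤ Sᶜ.ncard + 1 := by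
  have hsub : Set.range Γ ⊆ Γ '' Sᶜ ∪ {c} := by
    rintro _ ⟨x, rfl⟩
    by_cases hx : x ∈ S
    · exact Or.inr (hS x hx)
    · exact Or.inl ⟨x, hx, rfl⟩
  calc colorCount Γ ≤ (Γ '' Sᶜ ∪ {c}).ncard := Set.ncard_le_ncard hsub (Set.toFinite _)
    _ ≤ (Γ '' Sᶜ).ncard + ({c} : Set ℕ).ncard := Set.ncard_union_le _ _
    _ ≤ Sᶜ.ncard + 1 := by
      rw [Set.ncard_singleton]
      gcongr
      exact Set.ncard_image_le (Set.toFinite _)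

theorem colorCount_le_of_isSVMC [Fintype V] {Γ : V → ℕ} (hΓ : IsSVMC A Γ) (u v : V) :
    colorCount Γ ≤ Fintype.card V - dist A u v + 2 := by
  classical
  obtain ⟨l, hpath, c, hc⟩ := hΓ u v
  have hlen := dist_le_length hpath.1
  have hinternal : {x | x ∈ l.dropLast}.ncard = l.length - 1 := by
    have hnodup : l.dropLast.Nodup :=
      (List.nodup_cons.mp hpath.2).2.sublist (List.dropLast_sublist l)
    rw [← List.coe_toFinset, Set.ncard_coe_finset, List.toFinset_card_of_nodup hnodup,
      List.length_dropLast]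
  have hsplit := Set.ncard_add_ncard_compl {x | x ∈ l.dropLast}
  rw [Nat.card_eq_fintype_card] at hsplit
  have hcount := colorCount_le_ncard_compl_add_one (S := {x | x ∈ l.dropLast}) hc
  omega

end SVMC

theorem smcv_le_of_diam_ge_three_general {V : Type*} [Fintype V] (A : V → V → Prop) (d : ℕ)
    (hd : SVMC.diam A = d) (h3 : 3 ≤ d) :
    SVMC.smcv A ≤ Fintype.card V - d + 2 := by
  obtain ⟨u, v, huv⟩ := SVMC.exists_dist_eq_diam A (by omega)
  refine csSup_le' ?_
  rintro _ ⟨Γ, hΓ, rfl⟩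
  rw [← hd, ← huv]
  exact SVMC.colorCount_le_of_isSVMC hΓ u v

/-- a strong digraph of order `n` with diameter `d ≥ 3` satisfies
`smc_v(D) ≤ n - d + 2`. -/
theorem smcv_le_of_diam_ge_three {V : Type*} [Fintype V] (A : V → V → Prop) (d : ℕ)
    (hstrong : SVMC.Strong A) (hd : SVMC.diam A = d) (h3 : 3 ≤ d) :
    SVMC.smcv A ≤ Fintype.card V - d + 2 :=
  smcv_le_of_diam_ge_three_general A d hd h3
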